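/- arXiv:2304.09257 — 5 statements merged into one kernel-verified Lean document; each statement's English description precedes it below -/
import Mathlib

section
/- Convex-splitting inequality (the key estimate in the discrete energy law): for all a, b ∈ [0,1], F(a) − F(b) ≤ f(a,b)·(a − b), where f(a,b) = F_i'(a) + F_e'(b) = (1/4)(3a + 4b³ − 6b² − b). -/
/-- The Ginzburg–Landau double-well potential. -/
noncomputable def F (u : ℝ) : ℝ := (1/4) * u^2 * (1 - u)^2

/-- The convex-splitting approximation of F'. -/
noncomputable def f (a b : ℝ) : ℝ := (1/4) * (3*a + 4*b^3 - 6*b^2 - b)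

/-- Convex-splitting inequality: key estimate in the discrete energy law. -/
theorem convex_splitting_inequality (a b : ℝ)
    (ha : a ∈ Set.Icc (0:ℝ) 1) (hb : b ∈ Set.Icc (0:ℝ) 1) :
    F a - F b ≤ f a b * (a - b) := by
  obtain ⟨ha0, ha1⟩ := ha
  obtain ⟨hb0, hb1⟩ := hb
  unfold F f
  nlinarith [sq_nonneg (a-b), sq_nonneg (a+b), sq_nonneg (a+b-1), sq_nonneg (a+b-2), sq_nonneg (a*b), mul_nonneg hb0 ha0, sq_nonneg ((a-b)*(a+b)), sq_nonneg ((a-b)*(a+b-2)), mul_nonneg (mul_nonneg ha0 hb0) (sq_nonneg (a-b)), mul_nonneg (mul_nonneg (sub_nonneg.2 ha1) (sub_nonneg.2 hb1)) (sq_nonneg (a-b))]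
end

section
/- Sign of the upwind flux at a maximum exceeding one: if a ≥ 1, then for every b ∈ ℝ and every s ∈ ℝ, s_⊕·(M↑(a) + M↓(b))_⊕ − s_⊖·(M↑(b) + M↓(a))_⊕ ≥ 0. -/
/-- The degenerate mobility `M(v) = K ⬝ (v)₊^p ⬝ (1-v)₊^q`. -/
noncomputable def M (Km : ℝ) (p q : ℕ) (v : ℝ) : ℝ :=
  Km * max v 0 ^ p * max (1 - v) 0 ^ q

/-- The point `v* = p/(p+q)` where the maximum of `M` is attained. -/
noncomputable def vstar (p q : ℕ) : ℝ := (p:ℝ) / ((p:ℝ) + (q:ℝ))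

/-- Increasing part of the mobility. -/
noncomputable def Mup (Km : ℝ) (p q : ℕ) (v : ℝ) : ℝ :=
  if v ≤ vstar p q then M Km p q v else M Km p q (vstar p q)

/-- Decreasing part of the mobility. -/
noncomputable def Mdown (Km : ℝ) (p q : ℕ) (v : ℝ) : ℝ :=
  if v ≤ vstar p q then 0 else M Km p q v - M Km p q (vstar p q)

/-!
For `a ≥ 1` the mobility vanishes, so `M↓(a) = -M(v*)`, while `M↑(b) ≤ M(v*)` because `v*` maximises
`M`. Hence `M↑(b) + M↓(a) ≤ 0`, the negative part of the flux drops out, and what is left is a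
product of two positive parts. That `v*` maximises `v^p (1-v)^q` on `[0, 1]` is weighted AM-GM
applied to `v / v*` and `(1 - v) / (1 - v*)` with weights `v*` and `1 - v*`.
-/

theorem pow_mul_pow_le_one_of_weighted_le {u w : ℝ} (hu : 0 ≤ u) (hw : 0 ≤ w) {p q : ℕ}
    (hpq : 0 < p + q) (h : p * u + q * w ≤ p + q) : u ^ p * w ^ q ≤ 1 := by
  have hS : (0 : ℝ) < p + q := by exact_mod_cast hpq
  have hmean : u ^ ((p : ℝ) / (p + q)) * w ^ ((q : ℝ) / (p + q)) ≤ 1 :=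
    calc u ^ ((p : ℝ) / (p + q)) * w ^ ((q : ℝ) / (p + q))
        ≤ p / (p + q) * u + q / (p + q) * w :=
          Real.geom_mean_le_arith_mean2_weighted (by positivity) (by positivity) hu hw
            (by field_simp)
      _ ≤ 1 := by
          rw [div_mul_eq_mul_div, div_mul_eq_mul_div, ← add_div, div_le_one hS]
          exact h
  have hpow := Real.rpow_le_one (by positivity) hmean hS.le
  rwa [Real.mul_rpow (by positivity) (by positivity), ← Real.rpow_mul hu, ← Real.rpow_mul hw,
    div_mul_cancel₀ _ hS.ne', div_mul_cancel₀ _ hS.ne', Real.rpow_natCast,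
    Real.rpow_natCast] at hpow

section Mobility

variable {Km : ℝ} {p q : ℕ}

theorem vstar_pos (hp : 0 < p) : 0 < vstar p q := by
  unfold vstar; positivity

theorem vstar_lt_one (hq : 0 < q) : vstar p q < 1 := by
  have hq' : (0 : ℝ) < q := by exact_mod_cast hq
  unfold vstar
  rw [div_lt_one (by positivity)]
  linarith

theorem pow_mul_one_sub_pow_le_vstar (hp : 0 < p) (hq : 0 < q) {x : ℝ} (hx₀ : 0 ≤ x)
    (hx₁ : x ≤ 1) : x ^ p * (1 - x) ^ q ≤ vstar p q ^ p * (1 - vstar p q) ^ q := by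
  have hv₀ := vstar_pos (q := q) hp
  have hv₁ := vstar_lt_one (p := p) hq
  have hS : (0 : ℝ) < p + q := by positivity
  have hweights : p * (x / vstar p q) + q * ((1 - x) / (1 - vstar p q)) ≤ p + q := by
    have hv' : 1 - vstar p q = q / (p + q) := by unfold vstar; field_simp; ring
    rw [hv', vstar]
    field_simp
    linarith
  have key := pow_mul_pow_le_one_of_weighted_le (div_nonneg hx₀ hv₀.le)
    (div_nonneg (sub_nonneg.2 hx₁) (sub_pos.2 hv₁).le) (by omega) hweights
  rwa [div_pow, div_pow, div_mul_div_comm, div_le_one (by positivity)] at key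

theorem M_nonneg (hK : 0 ≤ Km) (v : ℝ) : 0 ≤ M Km p q v := by
  unfold M; positivity

theorem M_of_nonpos (hp : 0 < p) {v : ℝ} (hv : v ≤ 0) : M Km p q v = 0 := by
  simp [M, max_eq_right hv, hp.ne']

theorem M_of_one_le (hq : 0 < q) {v : ℝ} (hv : 1 ≤ v) : M Km p q v = 0 := by
  simp [M, max_eq_right (sub_nonpos.2 hv), hq.ne']

theorem M_of_mem_Icc {v : ℝ} (hv : v ∈ Set.Icc (0 : ℝ) 1) :
    M Km p q v = Km * (v ^ p * (1 - v) ^ q) := by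
  rw [M, max_eq_left hv.1, max_eq_left (sub_nonneg.2 hv.2), mul_assoc]

theorem M_le_M_vstar (hK : 0 ≤ Km) (hp : 0 < p) (hq : 0 < q) (v : ℝ) :
    M Km p q v ≤ M Km p q (vstar p q) := by
  rcases le_or_gt v 0 with hv₀ | hv₀
  · exact (M_of_nonpos hp hv₀).trans_le (M_nonneg hK _)
  rcases le_or_gt 1 v with hv₁ | hv₁
  · exact (M_of_one_le hq hv₁).trans_le (M_nonneg hK _)
  rw [M_of_mem_Icc ⟨hv₀.le, hv₁.le⟩,
    M_of_mem_Icc ⟨(vstar_pos hp).le, (vstar_lt_one hq).le⟩]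
  exact mul_le_mul_of_nonneg_left (pow_mul_one_sub_pow_le_vstar hp hq hv₀.le hv₁.le) hK

theorem Mup_le_M_vstar (hK : 0 ≤ Km) (hp : 0 < p) (hq : 0 < q) (v : ℝ) :
    Mup Km p q v ≤ M Km p q (vstar p q) := by
  unfold Mup
  split_ifs
  exacts [M_le_M_vstar hK hp hq v, le_rfl]

theorem Mdown_of_one_le (hq : 0 < q) {v : ℝ} (hv : 1 ≤ v) :
    Mdown Km p q v = -M Km p q (vstar p q) := by
  rw [Mdown, if_neg (not_le.2 ((vstar_lt_one hq).trans_le hv)), M_of_one_le hq hv, zero_sub]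

end Mobility

/-- Sign of the upwind flux at a maximum exceeding one. -/
theorem upwind_flux_nonneg_at_max_exceeding_one (Km : ℝ) (hK : 0 < Km)
    (p q : ℕ) (hp : 1 ≤ p) (hq : 1 ≤ q)
    (a : ℝ) (ha : 1 ≤ a) (b s : ℝ) :
    max s 0 * max (Mup Km p q a + Mdown Km p q b) 0
      - max (-s) 0 * max (Mup Km p q b + Mdown Km p q a) 0 ≥ 0 := by
  have hback : Mup Km p q b + Mdown Km p q a ≤ 0 := by
    rw [Mdown_of_one_le hq ha]
    linarith [Mup_le_M_vstar hK.le hp hq b]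
  rw [max_eq_right hback, mul_zero, sub_zero]
  positivity
end

section
/- Nonnegativity of the upwind form tested with its own potential: for any real families μ, v : 𝒦 → ℝ, the sum over all ordered pairs of adjacent cells (K,L) of w(K,L)·Φ_{K,L}(μ, v)·(μ_K − μ_L) is nonnegative (this is the discrete counterpart of a_h^upw(μ, M(v); μ) ≥ 0, used to derive unconditional energy stability). -/
/-- The upwind edge flux `Φ_{K,L}(μ, v)` between adjacent cells `K` and `L`. -/
noncomputable def Phi (Km : ℝ) (p q : ℕ) {𝒦 : Type*} (μ v : 𝒦 → ℝ) (a b : 𝒦) : ℝ :=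
  max (μ a - μ b) 0 * max (Mup Km p q (v a) + Mdown Km p q (v b)) 0
    - max (-(μ a - μ b)) 0 * max (Mup Km p q (v b) + Mdown Km p q (v a)) 0

/-- Nonnegativity of the upwind form tested with its own potential:
the discrete counterpart of `a_h^upw(μ, M(v); μ) ≥ 0`. -/
theorem upwind_form_nonneg (Km : ℝ) (hK : 0 < Km)
    (p q : ℕ) (hp : 1 ≤ p) (hq : 1 ≤ q)
    {𝒦 : Type*} [Fintype 𝒦]
    (m : 𝒦 → ℝ) (hm : ∀ K, 0 < m K)
    (adj : 𝒦 → 𝒦 → Prop) [DecidableRel adj]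
    (hadj_symm : ∀ K L, adj K L → adj L K) (hadj_irrefl : ∀ K, ¬ adj K K)
    (w : 𝒦 → 𝒦 → ℝ) (hw_symm : ∀ K L, w K L = w L K)
    (hw_pos : ∀ K L, adj K L → 0 < w K L)
    (μ v : 𝒦 → ℝ) :
    0 ≤ ∑ K, ∑ L, (if adj K L then w K L * Phi Km p q μ v K L * (μ K - μ L) else 0) := by
  apply Finset.sum_nonneg
  intro K _
  apply Finset.sum_nonneg
  intro L _
  split
  · rename_i h
    have hw := (hw_pos K L h).le
    have hphi : 0 ≤ Phi Km p q μ v K L * (μ K - μ L) := by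
      unfold Phi
      set d := μ K - μ L with hd
      rcases le_total 0 d with hle | hle
      · rw [max_eq_left hle, max_eq_right (by linarith : -d ≤ 0)]
        have : (d * max (Mup Km p q (v K) + Mdown Km p q (v L)) 0 - 0 *
            max (Mup Km p q (v L) + Mdown Km p q (v K)) 0) * d
            = d * d * max (Mup Km p q (v K) + Mdown Km p q (v L)) 0 := by ring
        rw [this]
        exact mul_nonneg (mul_self_nonneg d) (le_max_right _ _)
      · rw [max_eq_right hle, max_eq_left (by linarith : 0 ≤ -d)]
        have : (0 * max (Mup Km p q (v K) + Mdown Km p q (v L)) 0 -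
            -d * max (Mup Km p q (v L) + Mdown Km p q (v K)) 0) * d
            = d * d * max (Mup Km p q (v L) + Mdown Km p q (v K)) 0 := by ring
        rw [this]
        exact mul_nonneg (mul_self_nonneg d) (le_max_right _ _)
    calc 0 ≤ w K L * (Phi Km p q μ v K L * (μ K - μ L)) := mul_nonneg hw hphi
    _ = w K L * Phi Km p q μ v K L * (μ K - μ L) := by ring
  · exact le_refl 0
end

section
/- Mass conservation of the fully discrete scheme (Proposition 'Conservation', first identity): if u : 𝒦 → ℝ solves the discrete u-equation and n : 𝒦 → ℝ solves the discrete n-equation, with the same mesh, time step Δt, reaction constants δ, P₀ and shared data μ, ν (and possibly different diffusion constants C_u, C_n > 0), then Σ_{K∈𝒦} m(K)·(u_K + n_K) = Σ_{K∈𝒦} m(K)·(u^m_K + n^m_K); i.e. the total discrete mass of tumor cells plus nutrients is conserved. -/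
/-- The proliferation function `P(u, n) = K_P ⬝ (u)₊^r ⬝ (1-u)₊^s ⬝ (n)₊`. -/
noncomputable def prolif (KP : ℝ) (r s : ℕ) (u n : ℝ) : ℝ :=
  KP * max u 0 ^ r * max (1 - u) 0 ^ s * max n 0


lemma Phi_antisymm (Km : ℝ) (p q : ℕ) {𝒦 : Type*} (μ v : 𝒦 → ℝ) (a b : 𝒦) :
    Phi Km p q μ v a b = - Phi Km p q μ v b a := by
  simp only [Phi, neg_sub]
  try ring

lemma sum_flux_zero {𝒦 : Type*} [Fintype 𝒦]
    (adj : 𝒦 → 𝒦 → Prop) [DecidableRel adj]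
    (hadj_symm : ∀ K L, adj K L → adj L K)
    (w : 𝒦 → 𝒦 → ℝ) (hw_symm : ∀ K L, w K L = w L K)
    (Km : ℝ) (p q : ℕ) (μ v : 𝒦 → ℝ) :
    ∑ K, ∑ L, (if adj K L then w K L * Phi Km p q μ v K L else 0) = 0 := by
  set f : 𝒦 → 𝒦 → ℝ := fun K L => if adj K L then w K L * Phi Km p q μ v K L else 0 with hf
  have hanti : ∀ K L, f K L = - f L K := by
    intro K L
    by_cases h : adj K L
    · have h' : adj L K := hadj_symm K L h
      simp only [hf, if_pos h, if_pos h', Phi_antisymm Km p q μ v K L, hw_symm K L]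
      ring
    · have h' : ¬ adj L K := fun hc => h (hadj_symm L K hc)
      simp [hf, h, h']
  have h1 : ∑ K, ∑ L, f K L = ∑ K, ∑ L, (- f L K) := by
    apply Finset.sum_congr rfl; intro K _
    apply Finset.sum_congr rfl; intro L _
    exact hanti K L
  have h2 : ∑ K, ∑ L, (- f L K) = - ∑ K, ∑ L, f K L := by
    rw [Finset.sum_comm]
    simp [Finset.sum_neg_distrib]
  have := h1.trans h2
  linarith

/-- Mass conservation of the fully discrete scheme: the total discrete mass of
tumor cells plus nutrients is conserved. -/
theorem discrete_mass_conservation (Km : ℝ) (hKm : 0 < Km)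
    (p q : ℕ) (hp : 1 ≤ p) (hq : 1 ≤ q)
    (KP : ℝ) (hKP : 0 < KP) (r s : ℕ) (hr : 1 ≤ r) (hs : 1 ≤ s)
    {𝒦 : Type*} [Fintype 𝒦]
    (m : 𝒦 → ℝ) (hm : ∀ K, 0 < m K)
    (adj : 𝒦 → 𝒦 → Prop) [DecidableRel adj]
    (hadj_symm : ∀ K L, adj K L → adj L K) (hadj_irrefl : ∀ K, ¬ adj K K)
    (w : 𝒦 → 𝒦 → ℝ) (hw_symm : ∀ K L, w K L = w L K)
    (hw_pos : ∀ K L, adj K L → 0 < w K L)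
    (Δt : ℝ) (hΔt : 0 < Δt) (Cu Cn : ℝ) (hCu : 0 < Cu) (hCn : 0 < Cn)
    (δ : ℝ) (hδ : 0 ≤ δ) (P₀ : ℝ) (hP₀ : 0 ≤ P₀)
    (um nm : 𝒦 → ℝ) (μ ν u n : 𝒦 → ℝ)
    (hu : ∀ K, m K * (u K - um K) / Δt =
      - Cu * (∑ L, if adj K L then w K L * Phi Km p q μ u K L else 0)
      + δ * P₀ * m K * prolif KP r s (u K) (n K) * max (ν K - μ K) 0)
    (hn : ∀ K, m K * (n K - nm K) / Δt =
      - Cn * (∑ L, if adj K L then w K L * Phi Km p q ν n K L else 0)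
      - δ * P₀ * m K * prolif KP r s (u K) (n K) * max (ν K - μ K) 0) :
    ∑ K, m K * (u K + n K) = ∑ K, m K * (um K + nm K) := by
  have Su := sum_flux_zero adj hadj_symm w hw_symm Km p q μ u
  have Sn := sum_flux_zero adj hadj_symm w hw_symm Km p q ν n
  have key : ∑ K, (m K * (u K - um K) / Δt + m K * (n K - nm K) / Δt) = 0 := by
    have hKL : ∀ K : 𝒦, m K * (u K - um K) / Δt + m K * (n K - nm K) / Δt
        = - Cu * (∑ L, if adj K L then w K L * Phi Km p q μ u K L else 0)
          + (- Cn) * (∑ L, if adj K L then w K L * Phi Km p q ν n K L else 0) := by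
      intro K
      rw [hu K, hn K]; ring
    rw [Finset.sum_congr rfl (fun K _ => hKL K), Finset.sum_add_distrib,
      ← Finset.mul_sum, ← Finset.mul_sum, Su, Sn]
    ring
  have key2 : ∑ K, (m K * (u K + n K) - m K * (um K + nm K)) = 0 := by
    have h3 : ∑ K, (m K * (u K + n K) - m K * (um K + nm K))
        = Δt * ∑ K, (m K * (u K - um K) / Δt + m K * (n K - nm K) / Δt) := by
      rw [Finset.mul_sum]
      apply Finset.sum_congr rfl; intro K _
      field_simp
      ring
    rw [h3, key, mul_zero]
  have h4 := Finset.sum_sub_distrib (s := (Finset.univ : Finset 𝒦))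
    (f := fun K => m K * (u K + n K)) (g := fun K => m K * (um K + nm K))
  rw [h4] at key2
  linarith
end

section
/- Mass conservation of the regularization (Proposition 'Conservation', second identity): for every u : 𝒦 → ℝ, the mass-lumped integral of the regularization equals the total mass of u, i.e. Σ_{K∈𝒦} (m(K)/(d+1))·Σ_{a ∈ V(K)} (Π₁u)(a) = Σ_{K∈𝒦} m(K)·u_K. -/
/-- The regularization `Π₁u`: to each vertex it assigns the measure-weighted
average of `u` over the cells containing that vertex. -/
noncomputable def Pi1 {𝒱 𝒦 : Type*} [Fintype 𝒦] [DecidableEq 𝒱]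
    (V : 𝒦 → Finset 𝒱) (m : 𝒦 → ℝ) (u : 𝒦 → ℝ) (a : 𝒱) : ℝ :=
  (∑ L, if a ∈ V L then m L * u L else 0) / (∑ L, if a ∈ V L then m L else 0)

/-- Mass conservation of the regularization: the mass-lumped integral of `Π₁u`
equals the total mass of `u`. -/
theorem regularization_mass_conservation
    {𝒱 𝒦 : Type*} [Fintype 𝒱] [Fintype 𝒦] [DecidableEq 𝒱]
    (d : ℕ) (hd : 1 ≤ d)
    (V : 𝒦 → Finset 𝒱) (hcard : ∀ K, (V K).card = d + 1)
    (hcover : ∀ a : 𝒱, ∃ K, a ∈ V K)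
    (m : 𝒦 → ℝ) (hm : ∀ K, 0 < m K)
    (u : 𝒦 → ℝ) :
    ∑ K, (m K / ((d:ℝ) + 1)) * ∑ a ∈ V K, Pi1 V m u a = ∑ K, m K * u K := by
  have hw : ∀ a : 𝒱, (0:ℝ) < ∑ L, if a ∈ V L then m L else 0 := by
    intro a
    obtain ⟨K, hK⟩ := hcover a
    refine Finset.sum_pos' (fun L _ => by split_ifs; exacts [(hm L).le, le_rfl]) ⟨K, Finset.mem_univ K, ?_⟩
    simp [hK, hm K]
  calc ∑ K, (m K / ((d:ℝ) + 1)) * ∑ a ∈ V K, Pi1 V m u a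
      = (1 / ((d:ℝ)+1)) * ∑ K, ∑ a, (if a ∈ V K then m K * Pi1 V m u a else 0) := by
        rw [Finset.mul_sum]
        refine Finset.sum_congr rfl fun K _ => ?_
        rw [Finset.sum_ite_mem, Finset.univ_inter, Finset.mul_sum, Finset.mul_sum]
        exact Finset.sum_congr rfl fun _ _ => by ring
    _ = (1 / ((d:ℝ)+1)) * ∑ a, (∑ K, if a ∈ V K then m K else 0) * Pi1 V m u a := by
        rw [Finset.sum_comm]
        congr 1
        refine Finset.sum_congr rfl fun a _ => ?_
        rw [Finset.sum_mul]
        exact Finset.sum_congr rfl fun K _ => by split <;> simp [mul_comm]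
    _ = (1 / ((d:ℝ)+1)) * ∑ a, ∑ K, (if a ∈ V K then m K * u K else 0) := by
        congr 1
        refine Finset.sum_congr rfl fun a _ => ?_
        rw [Pi1, mul_div_cancel₀ _ (hw a).ne']
    _ = (1 / ((d:ℝ)+1)) * ∑ K, ((d:ℝ)+1) * (m K * u K) := by
        rw [Finset.sum_comm]
        congr 1
        refine Finset.sum_congr rfl fun K _ => ?_
        rw [Finset.sum_ite_mem, Finset.univ_inter, Finset.sum_const, hcard K,
          nsmul_eq_mul]
        push_cast; ring
    _ = ∑ K, m K * u K := by
        rw [Finset.mul_sum]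
        refine Finset.sum_congr rfl fun K _ => ?_
        have : ((d:ℝ)+1) ≠ 0 := by positivity
        field_simp
end
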